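/- arXiv:2503.18953 — 2 statements merged into one kernel-verified Lean document; each statement's English description precedes it below -/
import Mathlib

section
/- Let E_1 ≤ ... ≤ E_N be real numbers, β₁ ≥ β₂, and 1 ≤ k ≤ N. Then (∑_{i=1}^k exp(-β₁ E_i)) · Z(β₂) ≥ (∑_{i=1}^k exp(-β₂ E_i)) · Z(β₁), where Z(β) = ∑_{i=1}^N exp(-β E_i). -/
/-! Split `Z(β)` into the first `k` terms and the tail. The cross terms between the two blocks
compare as required termwise, since `β ↦ exp (-β a) / exp (-β b)` is nondecreasing for `a ≤ b`;
the diagonal block `(∑_{i<k} e^{-β₁ E_i}) (∑_{i<k} e^{-β₂ E_i})` appears on both sides. -/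

theorem Finset.sum_mul_sum_le_sum_mul_sum_of_cross_le {ι : Type*} [DecidableEq ι]
    {s u : Finset ι} (hsu : s ⊆ u) {f g : ι → ℝ}
    (hcross : ∀ i ∈ s, ∀ j ∈ u \ s, g i * f j ≤ f i * g j) :
    (∑ i ∈ s, g i) * (∑ i ∈ u, f i) ≤ (∑ i ∈ s, f i) * (∑ i ∈ u, g i) := by
  have htail : (∑ i ∈ s, g i) * (∑ j ∈ u \ s, f j) ≤ (∑ i ∈ s, f i) * (∑ j ∈ u \ s, g j) := by
    simp only [Finset.sum_mul_sum]
    exact Finset.sum_le_sum fun i hi => Finset.sum_le_sum fun j hj => hcross i hi j hj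
  rw [← Finset.sum_sdiff hsu (f := f), ← Finset.sum_sdiff hsu (f := g), mul_add, mul_add,
    mul_comm (∑ i ∈ s, g i) (∑ i ∈ s, f i)]
  exact add_le_add_left htail _

theorem Real.exp_neg_mul_mul_exp_neg_mul_le {β₁ β₂ a b : ℝ} (hβ : β₂ ≤ β₁) (hab : a ≤ b) :
    Real.exp (-β₂ * a) * Real.exp (-β₁ * b) ≤ Real.exp (-β₁ * a) * Real.exp (-β₂ * b) := by
  rw [← Real.exp_add, ← Real.exp_add, Real.exp_le_exp]
  nlinarith [mul_nonneg (sub_nonneg.mpr hβ) (sub_nonneg.mpr hab)]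

theorem gibbs_majorization_cross_multiplied_general (N : ℕ) (E : ℕ → ℝ)
    (hE : ∀ i j, i ≤ j → j < N → E i ≤ E j) (β₁ β₂ : ℝ) (h : β₁ ≥ β₂)
    (k : ℕ) (hkN : k ≤ N) :
    (∑ i ∈ Finset.range k, Real.exp (-β₁ * E i)) *
      (∑ i ∈ Finset.range N, Real.exp (-β₂ * E i)) ≥
    (∑ i ∈ Finset.range k, Real.exp (-β₂ * E i)) *
      (∑ i ∈ Finset.range N, Real.exp (-β₁ * E i)) := by
  refine Finset.sum_mul_sum_le_sum_mul_sum_of_cross_le (Finset.range_subset_range.mpr hkN) ?_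
  intro i hi j hj
  obtain ⟨hjN, hkj⟩ : j < N ∧ ¬j < k := by simpa using hj
  have hij : i ≤ j := (Finset.mem_range.mp hi).le.trans (not_lt.mp hkj)
  exact Real.exp_neg_mul_mul_exp_neg_mul_le h (hE i j hij hjN)

theorem gibbs_majorization_cross_multiplied (N : ℕ) (E : ℕ → ℝ)
    (hE : ∀ i j, i ≤ j → j < N → E i ≤ E j) (β₁ β₂ : ℝ) (h : β₁ ≥ β₂)
    (k : ℕ) (hk1 : 1 ≤ k) (hkN : k ≤ N) :
    (∑ i ∈ Finset.range k, Real.exp (-β₁ * E i)) *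
      (∑ i ∈ Finset.range N, Real.exp (-β₂ * E i)) ≥
    (∑ i ∈ Finset.range k, Real.exp (-β₂ * E i)) *
      (∑ i ∈ Finset.range N, Real.exp (-β₁ * E i)) :=
  gibbs_majorization_cross_multiplied_general N E hE β₁ β₂ h k hkN
end

section
/- Let E_1 ≤ ... ≤ E_N and β₂ ≥ β₁ ≥ 0. The Gibbs majorization chain is transitive and consistent: if p(β) denotes the Gibbs vector at inverse temperature β, then p(β₂) majorizes p(β₁) and p(β₁) majorizes p(0), where p(0) is the uniform distribution (1/N,...,1/N). -/
noncomputable def gibbsProb (N : ℕ) (E : ℕ → ℝ) (β : ℝ) (i : ℕ) : ℝ :=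
  Real.exp (-β * E i) / (∑ j ∈ Finset.range N, Real.exp (-β * E j))

/-!
Raising the inverse temperature from `β` to `β'` multiplies the Gibbs weight of level `i` by
`exp (-(β' - β) E i)`, which is non-increasing in `i` since the energies are sorted. Such a
monotone likelihood ratio moves mass towards every initial segment of low-energy levels, so all
partial sums grow with `β`. At `β = 0` the Gibbs vector is uniform.
-/

open Finset Real

theorem sum_range_div_le_sum_range_div {f g : ℕ → ℝ} {k N : ℕ} (hk : k ≤ N)
    (hf : 0 < ∑ i ∈ range N, f i) (hg : 0 < ∑ i ∈ range N, g i)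
    (hfg : ∀ i < k, ∀ j ∈ Ico k N, f i * g j ≤ g i * f j) :
    (∑ i ∈ range k, f i) / ∑ i ∈ range N, f i ≤ (∑ i ∈ range k, g i) / ∑ i ∈ range N, g i := by
  have hcross : (∑ i ∈ range k, f i) * ∑ j ∈ Ico k N, g j ≤
      (∑ i ∈ range k, g i) * ∑ j ∈ Ico k N, f j := by
    rw [sum_mul_sum, sum_mul_sum]
    exact sum_le_sum fun i hi => sum_le_sum fun j hj => hfg i (mem_range.1 hi) j hj
  rw [div_le_div_iff₀ hf hg, ← sum_range_add_sum_Ico f hk, ← sum_range_add_sum_Ico g hk]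
  linear_combination hcross

theorem exp_mul_exp_le_of_le {β β' a b : ℝ} (hβ : β ≤ β') (hab : a ≤ b) :
    exp (-β * a) * exp (-β' * b) ≤ exp (-β' * a) * exp (-β * b) := by
  rw [← exp_add, ← exp_add, exp_le_exp]
  nlinarith [mul_nonneg (sub_nonneg.2 hβ) (sub_nonneg.2 hab)]

theorem sum_range_gibbsProb (N : ℕ) (E : ℕ → ℝ) (β : ℝ) (k : ℕ) :
    ∑ i ∈ range k, gibbsProb N E β i =
      (∑ i ∈ range k, exp (-β * E i)) / ∑ j ∈ range N, exp (-β * E j) := by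
  simp only [gibbsProb, sum_div]

theorem gibbs_partition_pos {N : ℕ} (hN : 1 ≤ N) (E : ℕ → ℝ) (β : ℝ) :
    0 < ∑ j ∈ range N, exp (-β * E j) :=
  sum_pos (fun _ _ => exp_pos _) ⟨0, mem_range.2 hN⟩

theorem sum_gibbsProb_eq_one {N : ℕ} (hN : 1 ≤ N) (E : ℕ → ℝ) (β : ℝ) :
    ∑ i ∈ range N, gibbsProb N E β i = 1 := by
  rw [sum_range_gibbsProb, div_self (gibbs_partition_pos hN E β).ne']

theorem gibbsProb_zero (N : ℕ) (E : ℕ → ℝ) (i : ℕ) : gibbsProb N E 0 i = 1 / N := by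
  simp [gibbsProb]

theorem sum_range_gibbsProb_le_of_le {N : ℕ} (hN : 1 ≤ N) {E : ℕ → ℝ}
    (hE : ∀ i j, i ≤ j → j < N → E i ≤ E j) {β β' : ℝ} (hβ : β ≤ β') {k : ℕ} (hk : k ≤ N) :
    ∑ i ∈ range k, gibbsProb N E β i ≤ ∑ i ∈ range k, gibbsProb N E β' i := by
  rw [sum_range_gibbsProb, sum_range_gibbsProb]
  refine sum_range_div_le_sum_range_div hk (gibbs_partition_pos hN E β)
    (gibbs_partition_pos hN E β') fun i hi j hj => ?_
  obtain ⟨hkj, hjN⟩ := mem_Ico.1 hj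
  exact exp_mul_exp_le_of_le hβ (hE i j (hi.trans_le hkj).le hjN)

theorem gibbs_majorization_chain (N : ℕ) (hN : 1 ≤ N) (E : ℕ → ℝ)
    (hE : ∀ i j, i ≤ j → j < N → E i ≤ E j) (β₁ β₂ : ℝ)
    (h1 : 0 ≤ β₁) (h2 : β₁ ≤ β₂) :
    (∀ k ≤ N, ∑ i ∈ Finset.range k, gibbsProb N E β₁ i ≤
        ∑ i ∈ Finset.range k, gibbsProb N E β₂ i) ∧
    (∑ i ∈ Finset.range N, gibbsProb N E β₁ i =
        ∑ i ∈ Finset.range N, gibbsProb N E β₂ i) ∧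
    (∀ k ≤ N, ∑ i ∈ Finset.range k, (1 : ℝ) / N ≤
        ∑ i ∈ Finset.range k, gibbsProb N E β₁ i) ∧
    (∑ i ∈ Finset.range N, (1 : ℝ) / N =
        ∑ i ∈ Finset.range N, gibbsProb N E β₁ i) := by
  have huniform : ∀ k, ∑ i ∈ range k, (1 : ℝ) / N = ∑ i ∈ range k, gibbsProb N E 0 i :=
    fun k => by simp only [gibbsProb_zero]
  refine ⟨fun k hk => sum_range_gibbsProb_le_of_le hN hE h2 hk, ?_, ?_, ?_⟩
  · rw [sum_gibbsProb_eq_one hN, sum_gibbsProb_eq_one hN]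
  · intro k hk
    rw [huniform]
    exact sum_range_gibbsProb_le_of_le hN hE h1 hk
  · rw [huniform, sum_gibbsProb_eq_one hN, sum_gibbsProb_eq_one hN]
end
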